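/- arXiv:1904.12393 — 5 statements merged into one kernel-verified Lean document; each statement's English description precedes it below -/
import Mathlib

section
/- Let K be a field of characteristic ≠ 2,3, F = K(C) a function field of a smooth projective geometrically irreducible curve over K, and E : y² = x³ + A an elliptic curve over F with A ∉ (F*)⁶·K*. Let P = (x₁,y₁) ∈ E(F) be a point of infinite order. Then x₁³/A ∉ K (it is a non-constant function). -/
open WeierstrassCurve WeierstrassCurve.Affine

/-- `F` is (abstractly) the function field of a smooth projective geometrically irreducible curve
over `K`: it is a finitely generated extension of transcendence degree one whose field of
constants (the algebraic closure of `K` in `F`) is `K` itself. -/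
def IsFunctionFieldOver (K F : Type*) [Field K] [Field F] [Algebra K F] : Prop :=
  (∃ t : F, Transcendental K t ∧
    FiniteDimensional (IntermediateField.adjoin K {t}) F) ∧
  ∀ a : F, IsAlgebraic K a → a ∈ (algebraMap K F).range

open Classical in
/-- Let `F = K(C)` be a function field over a field `K` of characteristic `≠ 2, 3`, and let
`E : y² = x³ + A` with `A ∉ (F*)⁶·K*`. If `P = (x₁, y₁) ∈ E(F)` has infinite order, then
`x₁³/A` is a non-constant function, i.e. `x₁³/A ∉ K`. -/
theorem x_cubed_div_A_nonconstant {K F : Type*} [Field K] [Field F] [Algebra K F]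
    (h2 : (2 : F) ≠ 0) (h3 : (3 : F) ≠ 0) (hFF : IsFunctionFieldOver K F)
    (A : F) (hA : A ≠ 0)
    (hA6 : ¬ ∃ (f : F) (c : K), c ≠ 0 ∧ A = f ^ 6 * algebraMap K F c)
    (W : WeierstrassCurve F) (hW : W = { a₁ := 0, a₂ := 0, a₃ := 0, a₄ := 0, a₆ := A })
    (x₁ y₁ : F) (h : W.toAffine.Nonsingular x₁ y₁)
    (htor : ¬ IsOfFinAddOrder (Point.some _ _ h : W.toAffine.Point)) :
    x₁ ^ 3 / A ∉ (algebraMap K F).range := by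
  subst hW
  rintro ⟨c, hc⟩
  -- the Weierstrass equation
  have heq : y₁ ^ 2 = x₁ ^ 3 + A := by
    have := h.1
    rw [WeierstrassCurve.Affine.equation_iff] at this
    simpa using this
  set cF : F := algebraMap K F c with hcF
  have hx3 : x₁ ^ 3 = cF * A := by
    field_simp at hc
    exact hc.symm
  -- basic facts about negY
  have hnegY : ∀ x y : F, ({ a₁ := 0, a₂ := 0, a₃ := 0, a₄ := 0, a₆ := A } :
      WeierstrassCurve F).toAffine.negY x y = -y := by
    intro x y; simp [WeierstrassCurve.Affine.negY]
  by_cases hc0 : cF = 0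
  · -- x₁ = 0, point of order 3
    have hx0 : x₁ = 0 := by
      have : x₁ ^ 3 = 0 := by rw [hx3, hc0, zero_mul]
      exact pow_eq_zero_iff (by norm_num) |>.mp this
    have hy0 : y₁ ≠ 0 := by
      intro hy
      rw [hy, hx0] at heq
      simp at heq
      exact hA heq.symm
    have hyne : y₁ ≠ ({ a₁ := 0, a₂ := 0, a₃ := 0, a₄ := 0, a₆ := A } :
        WeierstrassCurve F).toAffine.negY x₁ y₁ := by
      rw [hnegY]
      intro hyy
      apply hy0
      have h2y : 2 * y₁ = 0 := by linear_combination hyy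
      exact (mul_eq_zero.mp h2y).resolve_left h2
    let W' : WeierstrassCurve F := { a₁ := 0, a₂ := 0, a₃ := 0, a₄ := 0, a₆ := A }
    have hslope : W'.toAffine.slope x₁ x₁ y₁ y₁ = 0 := by
      rw [WeierstrassCurve.Affine.slope_of_Y_ne rfl hyne]
      simp [hx0]
    have hadd : (Point.some _ _ h : W'.toAffine.Point) + Point.some _ _ h =
        Point.some _ _ (WeierstrassCurve.Affine.nonsingular_add h h fun hxy => hyne hxy.2) :=
      WeierstrassCurve.Affine.Point.add_self_of_Y_ne hyne
    have hX : W'.toAffine.addX x₁ x₁ (W'.toAffine.slope x₁ x₁ y₁ y₁) = x₁ := by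
      rw [hslope]; simp only [WeierstrassCurve.Affine.addX, hx0]; ring
    have hY : W'.toAffine.addY x₁ x₁ y₁ (W'.toAffine.slope x₁ x₁ y₁ y₁) =
        W'.toAffine.negY x₁ y₁ := by
      rw [hslope]
      simp only [WeierstrassCurve.Affine.addY, WeierstrassCurve.Affine.negAddY,
        WeierstrassCurve.Affine.addX, hnegY, hx0, W', WeierstrassCurve.Affine.negY]
      ring
    have h3P : (Point.some _ _ h : W'.toAffine.Point) + Point.some _ _ h + Point.some _ _ h = 0 := by
      rw [hadd]
      exact WeierstrassCurve.Affine.Point.add_of_Y_eq hX hY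
    apply htor
    rw [isOfFinAddOrder_iff_nsmul_eq_zero]
    refine ⟨3, by norm_num, ?_⟩
    have : (3 : ℕ) • (Point.some _ _ h : W'.toAffine.Point) =
        Point.some _ _ h + Point.some _ _ h + Point.some _ _ h := by abel
    rw [this, h3P]
  · by_cases hc1 : cF = -1
    · -- y₁ = 0, point of order 2
      have hy0 : y₁ = 0 := by
        have : y₁ ^ 2 = 0 := by rw [heq, hx3, hc1]; ring
        exact pow_eq_zero_iff (by norm_num) |>.mp this
      have hyeq : y₁ = ({ a₁ := 0, a₂ := 0, a₃ := 0, a₄ := 0, a₆ := A } :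
          WeierstrassCurve F).toAffine.negY x₁ y₁ := by
        rw [hnegY, hy0, neg_zero]
      have h2P : (Point.some _ _ h : ({ a₁ := 0, a₂ := 0, a₃ := 0, a₄ := 0, a₆ := A } :
          WeierstrassCurve F).toAffine.Point) + Point.some _ _ h = 0 :=
        WeierstrassCurve.Affine.Point.add_self_of_Y_eq hyeq
      apply htor
      rw [isOfFinAddOrder_iff_nsmul_eq_zero]
      refine ⟨2, by norm_num, ?_⟩
      rw [two_nsmul, h2P]
    · -- generic case: contradiction with hA6
      have hcK0 : c ≠ 0 := by
        intro hc'; exact hc0 (by rw [hcF, hc', map_zero])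
      have hc1K : c + 1 ≠ 0 := by
        intro hc'
        apply hc1
        have hz : cF + 1 = 0 := by
          rw [hcF, ← map_one (algebraMap K F), ← map_add, hc', map_zero]
        linear_combination hz
      have hcF1 : cF + 1 ≠ 0 := by
        intro hc'
        exact hc1 (by linear_combination hc')
      have hy2 : y₁ ^ 2 = (cF + 1) * A := by rw [heq, hx3]; ring
      have hx0 : x₁ ≠ 0 := by
        intro hx
        have hz : cF * A = 0 := by rw [← hx3, hx]; ring
        exact mul_ne_zero hc0 hA hz
      have hy0 : y₁ ≠ 0 := by
        intro hy
        have hz : (cF + 1) * A = 0 := by rw [← hy2, hy]; ring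
        exact mul_ne_zero hcF1 hA hz
      apply hA6
      refine ⟨y₁ / x₁, c ^ 2 / (c + 1) ^ 3, ?_, ?_⟩
      · exact div_ne_zero (pow_ne_zero _ hcK0) (pow_ne_zero _ hc1K)
      · have hmap : algebraMap K F (c ^ 2 / (c + 1) ^ 3) = cF ^ 2 / (cF + 1) ^ 3 := by
          rw [map_div₀, map_pow, map_pow, map_add, map_one]
        rw [hmap]
        have hy6 : y₁ ^ 6 = (cF + 1) ^ 3 * A ^ 3 := by
          calc y₁ ^ 6 = (y₁ ^ 2) ^ 3 := by ring
          _ = (cF + 1) ^ 3 * A ^ 3 := by rw [hy2]; ring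
        have hx6 : x₁ ^ 6 = cF ^ 2 * A ^ 2 := by
          calc x₁ ^ 6 = (x₁ ^ 3) ^ 2 := by ring
          _ = cF ^ 2 * A ^ 2 := by rw [hx3]; ring
        rw [div_pow, div_mul_div_comm, hy6, hx6]
        rw [eq_div_iff (mul_ne_zero (mul_ne_zero (pow_ne_zero _ hc0) (pow_ne_zero _ hA))
          (pow_ne_zero _ hcF1))]
        ring
end

section
/- Let F be a complete discretely valued field of characteristic 2 with valuation v, and let E be an elliptic curve over F with a minimal Weierstrass model y² + a₁xy + a₃y = x³ + a₂x² + a₄x + a₆ satisfying v(a₁) ≥ 1, v(a₂) = 1, v(a₃) = m+2, v(a₄) ≥ m+3, v(a₆) ≥ 2m+4 for some integer m ≥ 0. Then v(j(E)) ≠ 0. -/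
open WeierstrassCurve

/-- A Weierstrass model is integral at `v` if all its coefficients have nonnegative valuation. -/
def IsIntegralModel {F : Type*} [Field F] (v : AddValuation F (WithTop ℤ))
    (W : WeierstrassCurve F) : Prop :=
  0 ≤ v W.a₁ ∧ 0 ≤ v W.a₂ ∧ 0 ≤ v W.a₃ ∧ 0 ≤ v W.a₄ ∧ 0 ≤ v W.a₆

/-- A Weierstrass model is minimal at `v` if it is integral and the valuation of its
discriminant is minimal among all integral models obtained by a change of variables. -/
def IsMinimalModel {F : Type*} [Field F] (v : AddValuation F (WithTop ℤ))
    (W : WeierstrassCurve F) : Prop :=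
  IsIntegralModel v W ∧ ∀ C : VariableChange F,
    IsIntegralModel v (C • W) → v W.Δ ≤ v (C • W).Δ

/-- Let `F` be a (complete) discretely valued field of characteristic 2 with valuation `v`, and
`E` an elliptic curve over `F` whose minimal Weierstrass model satisfies `v(a₁) ≥ 1`,
`v(a₂) = 1`, `v(a₃) = m + 2`, `v(a₄) ≥ m + 3`, `v(a₆) ≥ 2m + 4` for some integer `m ≥ 0`.
Then `v(j(E)) ≠ 0`. -/
theorem val_j_ne_zero_char_two {F : Type*} [Field F] [CharP F 2]
    (v : AddValuation F (WithTop ℤ)) (W : WeierstrassCurve F) [W.IsElliptic]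
    (hmin : IsMinimalModel v W) (m : ℕ)
    (h1 : (1 : WithTop ℤ) ≤ v W.a₁)
    (h2 : v W.a₂ = 1)
    (h3 : v W.a₃ = ((m : ℤ) + 2 : ℤ))
    (h4 : (((m : ℤ) + 3 : ℤ) : WithTop ℤ) ≤ v W.a₄)
    (h6 : ((2 * (m : ℤ) + 4 : ℤ) : WithTop ℤ) ≤ v W.a₆) :
    v W.j ≠ 0 := by
  classical
  by_cases ha1 : W.a₁ = 0
  · rw [W.j_eq_zero_of_char_two ha1]
    simp
  obtain ⟨r, hr⟩ : ∃ r : ℤ, v W.a₁ = (r : WithTop ℤ) := by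
    have h := (v.ne_top_iff).2 ha1
    cases hh : v W.a₁ with
    | top => exact absurd hh h
    | coe r => exact ⟨r, rfl⟩
  have hr1 : (1 : ℤ) ≤ r := by
    rw [hr] at h1; exact_mod_cast h1
  have hc2 : (2 : F) = 0 := by exact_mod_cast CharP.cast_eq_zero F 2
  set T1 := W.a₁^4*W.a₂*W.a₃^2 with hT1
  set T2 := W.a₁^5*W.a₃*W.a₄ with hT2
  set T3 := W.a₁^4*W.a₄^2 with hT3
  set T4 := W.a₁^6*W.a₆ with hT4
  set T5 := W.a₁^3*W.a₃^3 with hT5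
  set T6 := W.a₃^4 with hT6
  have hΔ : W.Δ = T1 + T2 + T3 + T4 + T5 + T6 := by
    rw [hT1, hT2, hT3, hT4, hT5, hT6]
    simp only [WeierstrassCurve.Δ, WeierstrassCurve.b₂, WeierstrassCurve.b₄,
      WeierstrassCurve.b₆, WeierstrassCurve.b₈]
    linear_combination (-216*W.a₆^2 - 32*W.a₄^3 - 108*W.a₃^2*W.a₆ - 14*W.a₃^4
      + 144*W.a₂*W.a₄*W.a₆ + 36*W.a₂*W.a₃^2*W.a₄ + 8*W.a₂^2*W.a₄^2 - 32*W.a₂^3*W.a₆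
      - 8*W.a₂^3*W.a₃^2 - 48*W.a₁*W.a₃*W.a₄^2 + 72*W.a₁*W.a₂*W.a₃*W.a₆
      + 18*W.a₁*W.a₂*W.a₃^3 + 8*W.a₁*W.a₂^2*W.a₃*W.a₄ + 36*W.a₁^2*W.a₄*W.a₆
      - 15*W.a₁^2*W.a₃^2*W.a₄ + 4*W.a₁^2*W.a₂*W.a₄^2 - 24*W.a₁^2*W.a₂^2*W.a₆
      - 4*W.a₁^2*W.a₂^2*W.a₃^2 + 18*W.a₁^3*W.a₃*W.a₆ + 4*W.a₁^3*W.a₂*W.a₃*W.a₄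
      - 6*W.a₁^4*W.a₂*W.a₆ - W.a₁^4*W.a₂*W.a₃^2 - W.a₁^6*W.a₆) * hc2
  have vT1 : v T1 = ((4*r + 2*(m:ℤ) + 5 : ℤ) : WithTop ℤ) := by
    rw [hT1, v.map_mul, v.map_mul, v.map_pow, v.map_pow, hr, h2, h3]
    norm_cast
    try simp only [smul_eq_mul, nsmul_eq_mul]
    try push_cast
    try omega
  have vT5 : v T5 = ((3*r + 3*(m:ℤ) + 6 : ℤ) : WithTop ℤ) := by
    rw [hT5, v.map_mul, v.map_pow, v.map_pow, hr, h3]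
    norm_cast
    try simp only [smul_eq_mul, nsmul_eq_mul]
    try push_cast
    try omega
  have vT6 : v T6 = ((4*(m:ℤ) + 8 : ℤ) : WithTop ℤ) := by
    rw [hT6, v.map_pow, h3]
    norm_cast
    try simp only [smul_eq_mul, nsmul_eq_mul]
    try push_cast
    try omega
  have vT2 : (((5*r + 2*(m:ℤ) + 5 : ℤ)) : WithTop ℤ) ≤ v T2 := by
    rw [hT2, v.map_mul, v.map_mul, v.map_pow, hr, h3]
    calc (((5*r + 2*(m:ℤ) + 5 : ℤ)) : WithTop ℤ)
        = ((5*r + ((m:ℤ)+2) : ℤ) : WithTop ℤ) + (((m:ℤ)+3 : ℤ) : WithTop ℤ) := by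
          norm_cast
          try simp only [smul_eq_mul, nsmul_eq_mul]
          try push_cast
          try omega
      _ ≤ _ := by
          refine add_le_add (le_of_eq ?_) h4
          norm_cast
          try simp only [smul_eq_mul, nsmul_eq_mul]
          try push_cast
          try omega
  have vT3 : (((4*r + 2*(m:ℤ) + 6 : ℤ)) : WithTop ℤ) ≤ v T3 := by
    rw [hT3, v.map_mul, v.map_pow, v.map_pow, hr]
    calc (((4*r + 2*(m:ℤ) + 6 : ℤ)) : WithTop ℤ)
        = ((4*r : ℤ) : WithTop ℤ) + (2 : ℕ) • (((m:ℤ)+3 : ℤ) : WithTop ℤ) := by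
          rw [← WithTop.coe_nsmul]
          norm_cast
          try simp only [smul_eq_mul, nsmul_eq_mul]
          try push_cast
          try omega
      _ ≤ _ := by
          refine add_le_add (le_of_eq ?_) (nsmul_le_nsmul_right h4 2)
          norm_cast
          try simp only [smul_eq_mul, nsmul_eq_mul]
          try push_cast
          try omega
  have vT4 : (((6*r + 2*(m:ℤ) + 4 : ℤ)) : WithTop ℤ) ≤ v T4 := by
    rw [hT4, v.map_mul, v.map_pow, hr]
    calc (((6*r + 2*(m:ℤ) + 4 : ℤ)) : WithTop ℤ)
        = ((6*r : ℤ) : WithTop ℤ) + ((2*(m:ℤ)+4 : ℤ) : WithTop ℤ) := by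
          norm_cast
          try simp only [smul_eq_mul, nsmul_eq_mul]
          try push_cast
          try omega
      _ ≤ _ := by
          refine add_le_add (le_of_eq ?_) h6
          norm_cast
          try simp only [smul_eq_mul, nsmul_eq_mul]
          try push_cast
          try omega
  have hjΔ : v W.j + v W.Δ = ((12 * r : ℤ) : WithTop ℤ) := by
    have hu : ((W.Δ'⁻¹ : Fˣ) : F) * W.Δ = 1 := by
      rw [← W.coe_Δ']
      exact W.Δ'.inv_mul
    have hj : W.j * W.Δ = W.a₁ ^ 12 := by
      rw [W.j_of_char_two]
      linear_combination (W.a₁ ^ 12) * hu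
    rw [← v.map_mul, hj, v.map_pow, hr]
    norm_cast
  have key : ∃ P : ℤ, v W.Δ = (P : WithTop ℤ) ∧ P ≠ 12 * r := by
    rcases lt_or_gt_of_ne (show (4*r + 2*(m:ℤ) + 5 : ℤ) ≠ 4*(m:ℤ) + 8 by omega) with hc | hc
    · -- T1 strictly minimal
      refine ⟨4*r + 2*(m:ℤ) + 5, ?_, by omega⟩
      have s2 : v (T1 + T2) = ((4*r + 2*(m:ℤ) + 5 : ℤ) : WithTop ℤ) := by
        rw [v.map_add_eq_of_lt_left, vT1]
        rw [vT1]
        exact lt_of_lt_of_le (by exact_mod_cast (by omega : (4*r + 2*(m:ℤ) + 5 : ℤ) < 5*r + 2*(m:ℤ) + 5)) vT2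
      have s3 : v (T1 + T2 + T3) = ((4*r + 2*(m:ℤ) + 5 : ℤ) : WithTop ℤ) := by
        rw [v.map_add_eq_of_lt_left, s2]
        rw [s2]
        exact lt_of_lt_of_le (by exact_mod_cast (by omega : (4*r + 2*(m:ℤ) + 5 : ℤ) < 4*r + 2*(m:ℤ) + 6)) vT3
      have s4 : v (T1 + T2 + T3 + T4) = ((4*r + 2*(m:ℤ) + 5 : ℤ) : WithTop ℤ) := by
        rw [v.map_add_eq_of_lt_left, s3]
        rw [s3]
        exact lt_of_lt_of_le (by exact_mod_cast (by omega : (4*r + 2*(m:ℤ) + 5 : ℤ) < 6*r + 2*(m:ℤ) + 4)) vT4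
      have s5 : v (T1 + T2 + T3 + T4 + T5) = ((4*r + 2*(m:ℤ) + 5 : ℤ) : WithTop ℤ) := by
        rw [v.map_add_eq_of_lt_left, s4]
        rw [s4, vT5]
        exact_mod_cast (by omega : (4*r + 2*(m:ℤ) + 5 : ℤ) < 3*r + 3*(m:ℤ) + 6)
      rw [hΔ, v.map_add_eq_of_lt_left, s5]
      rw [s5, vT6]
      exact_mod_cast hc
    · -- T6 strictly minimal
      refine ⟨4*(m:ℤ) + 8, ?_, by omega⟩
      rw [hΔ, v.map_add_eq_of_lt_right, vT6]
      rw [vT6]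
      refine v.map_lt_add (v.map_lt_add (v.map_lt_add (v.map_lt_add ?_ ?_) ?_) ?_) ?_
      · rw [vT1]; exact_mod_cast hc
      · exact lt_of_lt_of_le (by exact_mod_cast (by omega : (4*(m:ℤ) + 8 : ℤ) < 5*r + 2*(m:ℤ) + 5)) vT2
      · exact lt_of_lt_of_le (by exact_mod_cast (by omega : (4*(m:ℤ) + 8 : ℤ) < 4*r + 2*(m:ℤ) + 6)) vT3
      · exact lt_of_lt_of_le (by exact_mod_cast (by omega : (4*(m:ℤ) + 8 : ℤ) < 6*r + 2*(m:ℤ) + 4)) vT4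
      · rw [vT5]; exact_mod_cast (by omega : (4*(m:ℤ) + 8 : ℤ) < 3*r + 3*(m:ℤ) + 6)
  obtain ⟨P, hP, hPne⟩ := key
  rw [hP] at hjΔ
  intro hj0
  rw [hj0, zero_add] at hjΔ
  exact hPne (by exact_mod_cast hjΔ)
end

section
/- Let F be a field of characteristic 3 with a discrete valuation v, and let E : y² = x³ + a₂x² + a₄x + a₆ be an elliptic curve over F with v(a₂) ≥ n, v(a₄) ≥ n+1, v(a₆) = 2n for some n ∈ {1,2}. Then v(j(E)) ≠ 0, where j(E) = 2a₂⁶ / (2a₂²a₄² + a₄³ + a₂³a₆). -/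
open WeierstrassCurve

/-- Let `F` be a field of characteristic 3 with a discrete valuation `v`, and
`E : y² = x³ + a₂x² + a₄x + a₆` an elliptic curve over `F` with `v(a₂) ≥ n`, `v(a₄) ≥ n + 1`,
`v(a₆) = 2n` for some `n ∈ {1, 2}`. Then `v(j(E)) ≠ 0`, where (in characteristic 3)
`j(E) = 2a₂⁶ / (2a₂²a₄² + a₄³ + a₂³a₆)`. -/
theorem val_j_ne_zero_char_three {F : Type*} [Field F] [CharP F 3]
    (v : AddValuation F (WithTop ℤ)) (W : WeierstrassCurve F) [W.IsElliptic]
    (ha₁ : W.a₁ = 0) (ha₃ : W.a₃ = 0)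
    (n : ℕ) (hn : n = 1 ∨ n = 2)
    (h2 : ((n : ℤ) : WithTop ℤ) ≤ v W.a₂)
    (h4 : (((n : ℤ) + 1 : ℤ) : WithTop ℤ) ≤ v W.a₄)
    (h6 : v W.a₆ = ((2 * (n : ℤ) : ℤ) : WithTop ℤ))
    (hj : W.j = 2 * W.a₂ ^ 6 / (2 * W.a₂ ^ 2 * W.a₄ ^ 2 + W.a₄ ^ 3 + W.a₂ ^ 3 * W.a₆)) :
    v W.j ≠ 0 := by
  intro hv
  set A := W.a₂ with hA'
  set B := W.a₄ with hB'
  set C := W.a₆ with hC'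
  set D := 2 * A ^ 2 * B ^ 2 + B ^ 3 + A ^ 3 * C with hDdef
  -- the valuation of 2 is zero since 2 = -1 in characteristic 3
  have h3 : (3 : F) = 0 := by exact_mod_cast CharP.cast_eq_zero F 3
  have h2F : (2 : F) = -1 := by linear_combination h3
  have hv2 : v (2 : F) = 0 := by rw [h2F, v.map_neg, v.map_one]
  -- the denominator is nonzero
  have hDne : D ≠ 0 := by
    intro h
    rw [hj, h, div_zero, v.map_zero] at hv
    simp at hv
  -- j * D = 2 * A ^ 6
  have hjD : W.j * D = 2 * A ^ 6 := by
    rw [hj]; field_simp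
  have hvN : v D = v (2 * A ^ 6) := by
    have h := v.map_mul W.j D
    rw [hjD, hv, zero_add] at h
    exact h.symm
  -- A ≠ 0
  have hAne : A ≠ 0 := by
    intro h
    rw [h] at hvN
    rw [show (2 : F) * 0 ^ 6 = 0 by ring, v.map_zero] at hvN
    exact (v.ne_top_iff.mpr hDne) hvN
  obtain ⟨m, hm⟩ := WithTop.ne_top_iff_exists.mp (v.ne_top_iff.mpr hAne)
  have hmn : (n : ℤ) ≤ m := by
    rw [← hm] at h2; exact_mod_cast h2
  have hn1 : 1 ≤ n := by omega
  have h2n3m : 2 * (n : ℤ) < 3 * m := by omega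
  -- valuation of the denominator
  have hvD : v D = ((6 * m : ℤ) : WithTop ℤ) := by
    rw [hvN, v.map_mul, v.map_pow, hv2, ← hm, zero_add]
    exact_mod_cast rfl
  -- valuation of A^3 * C
  have hAC : v (A ^ 3 * C) = ((3 * m + 2 * (n : ℤ) : ℤ) : WithTop ℤ) := by
    rw [v.map_mul, v.map_pow, ← hm, h6]
    exact_mod_cast rfl
  have hlt : v (A ^ 3 * C) < v D := by
    rw [hAC, hvD]
    exact_mod_cast (by omega : 3 * m + 2 * (n : ℤ) < 6 * m)
  have hE : v (D - A ^ 3 * C) = ((3 * m + 2 * (n : ℤ) : ℤ) : WithTop ℤ) := by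
    rw [AddValuation.map_sub_eq_of_lt_right v hlt, hAC]
  have hEeq : D - A ^ 3 * C = B ^ 2 * (2 * A ^ 2 + B) := by
    rw [hDdef]; ring
  rw [hEeq] at hE
  -- B ≠ 0
  have hBne : B ≠ 0 := by
    intro h
    rw [h, show (0:F) ^ 2 * (2 * A ^ 2 + 0) = 0 by ring, v.map_zero] at hE
    exact (WithTop.top_ne_coe) hE
  obtain ⟨l, hl⟩ := WithTop.ne_top_iff_exists.mp (v.ne_top_iff.mpr hBne)
  have hln : (n : ℤ) + 1 ≤ l := by
    rw [← hl] at h4; exact_mod_cast h4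
  -- valuation of 2 * A ^ 2
  have hv2A : v (2 * A ^ 2) = ((2 * m : ℤ) : WithTop ℤ) := by
    rw [v.map_mul, v.map_pow, hv2, ← hm, zero_add]
    exact_mod_cast rfl
  have hEmul : v (B ^ 2 * (2 * A ^ 2 + B)) = 2 • ((l : WithTop ℤ)) + v (2 * A ^ 2 + B) := by
    rw [v.map_mul, v.map_pow, ← hl]
  rw [hEmul] at hE
  rcases lt_trichotomy l (2 * m) with hc | hc | hc
  · -- v B < v (2 A²): sum has valuation l, giving 3l = 3m + 2n, impossible mod 3
    have : v (2 * A ^ 2 + B) = (l : WithTop ℤ) := by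
      rw [AddValuation.map_add_eq_of_lt_right v (by rw [hv2A, ← hl]; exact_mod_cast hc), ← hl]
    rw [this] at hE
    have : 2 * l + l = 3 * m + 2 * (n : ℤ) := by exact_mod_cast hE
    omega
  · -- l = 2m : valuation of the sum is ≥ 2m, total ≥ 6m > 3m + 2n
    have hmin : ((2 * m : ℤ) : WithTop ℤ) ≤ v (2 * A ^ 2 + B) := by
      have := v.map_add (2 * A ^ 2) B
      rw [hv2A, ← hl, hc] at this
      simpa using this
    have hge : ((2 * l + 2 * m : ℤ) : WithTop ℤ) ≤ 2 • ((l : WithTop ℤ)) + v (2 * A ^ 2 + B) := by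
      calc ((2 * l + 2 * m : ℤ) : WithTop ℤ) = 2 • ((l : WithTop ℤ)) + ((2 * m : ℤ) : WithTop ℤ) := by
            exact_mod_cast rfl
        _ ≤ _ := add_le_add_right hmin _
    rw [hE] at hge
    have : 2 * l + 2 * m ≤ 3 * m + 2 * (n : ℤ) := by exact_mod_cast hge
    omega
  · -- 2m < l : sum has valuation 2m, giving 2l + 2m = 3m + 2n with l > 2m
    have : v (2 * A ^ 2 + B) = ((2 * m : ℤ) : WithTop ℤ) := by
      rw [AddValuation.map_add_eq_of_lt_left v (by rw [hv2A, ← hl]; exact_mod_cast hc)]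
      exact hv2A
    rw [this] at hE
    have : 2 * l + 2 * m = 3 * m + 2 * (n : ℤ) := by exact_mod_cast hE
    omega
end

section
/- Let E be an elliptic curve over a field K and let D_n denote the elliptic divisibility sequence of divisors attached to a non-torsion point P. Then the sequence satisfies the strong divisibility property: for all positive integers m, n, gcd(D_m, D_n) = D_{gcd(m,n)}, where the gcd of two effective divisors is the valuation-wise minimum. -/
open WeierstrassCurve WeierstrassCurve.Affine

/-- `HasEDSVal v W P d` says that the term of the elliptic divisibility sequence attached to the
point `P` has multiplicity `d` at the place `v`, i.e. `d = max{-(1/2) v(x_v(P)), 0}` where `x_v`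
is the `x`-coordinate of `P` on a `v`-minimal Weierstrass model (under the variable change `C`,
the point `(x, y)` has new `x`-coordinate `u⁻²(x - r)`). -/
def HasEDSVal {F : Type*} [Field F] (v : AddValuation F (WithTop ℤ)) (W : WeierstrassCurve F)
    (P : W.toAffine.Point) (d : ℕ) : Prop :=
  ∃ (C : VariableChange F) (x y : F) (h : W.toAffine.Nonsingular x y),
    P = Point.some x y h ∧ IsMinimalModel v (C • W) ∧
    ((-(2 * (d : ℤ)) : ℤ) : WithTop ℤ) = min (v ((C.u⁻¹ : Fˣ) ^ 2 * (x - C.r))) 0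

/-- The valuation `v` of `F` is trivial on the base field `K`, i.e. `v` is a place of the
function field `F` over `K`. -/
def TrivialOnBase (K : Type*) {F : Type*} [Field K] [Field F] [Algebra K F]
    (v : AddValuation F (WithTop ℤ)) : Prop :=
  ∀ c : K, c ≠ 0 → v (algebraMap K F c) = 0

namespace EDSAux

variable {F : Type*} [Field F] [DecidableEq F]

lemma v_natCast_nonneg (v : AddValuation F (WithTop ℤ)) (n : ℕ) : 0 ≤ v (n : F) := by
  induction n with
  | zero => simp
  | succ k ih =>
      push_cast
      refine le_trans ?_ (v.map_add _ _)
      simp only [le_min_iff]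
      exact ⟨ih, by simp [v.map_one]⟩

lemma v_ne_top (v : AddValuation F (WithTop ℤ)) {a : F} (ha : a ≠ 0) : v a ≠ ⊤ :=
  v.ne_top_iff.mpr ha

lemma coe_add_le_cancel {x : WithTop ℤ} {c d : ℤ} (h : (c : WithTop ℤ) + x ≤ (d : WithTop ℤ)) :
    x ≤ ((d - c : ℤ) : WithTop ℤ) := by
  cases x with
  | top => simp at h
  | coe x0 =>
      rw [← WithTop.coe_add, WithTop.coe_le_coe] at h
      exact WithTop.coe_le_coe.mpr (by omega)

lemma min_v_sub_eq (v : AddValuation F (WithTop ℤ)) {a r : F} (hr : 0 ≤ v r) :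
    min (v (a - r)) 0 = min (v a) 0 := by
  rcases lt_or_ge (v a) 0 with h | h
  · rw [v.map_sub_eq_of_lt_left (lt_of_lt_of_le h hr)]
  · rw [min_eq_right h, min_eq_right (AddValuation.map_le_sub v h hr)]

lemma key (v : AddValuation F (WithTop ℤ)) {V : WeierstrassCurve F}
    (hV : IsIntegralModel v V) {x₁ y₁ x₂ y₂ L : F}
    (e₁ : V.toAffine.Equation x₁ y₁) (e₂ : V.toAffine.Equation x₂ y₂)
    (hL : (x₁ ≠ x₂ ∧ L * (x₁ - x₂) = y₁ - y₂) ∨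
      (x₁ = x₂ ∧ y₁ = y₂ ∧ (2 * y₁ + V.a₁ * x₁ + V.a₃ ≠ 0) ∧
        L * (2 * y₁ + V.a₁ * x₁ + V.a₃) = 3 * x₁ ^ 2 + 2 * V.a₂ * x₁ + V.a₄ - V.a₁ * y₁)) :
    min (v (V.toAffine.addX x₁ x₂ L)) 0 ≤ max (min (v x₁) 0) (min (v x₂) 0) := by
  obtain ⟨ha₁, ha₂, ha₃, ha₄, ha₆⟩ := hV
  have hv2 : 0 ≤ v (2 : F) := by
    have := v_natCast_nonneg v 2; push_cast at this; exact this
  by_contra hcon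
  push_neg at hcon
  -- the two identities
  have hId2 : x₁ * x₂ + V.toAffine.addX x₁ x₂ L * (x₁ + x₂) =
      V.a₄ + -(2 * L * (y₁ - L * x₁)) + -(V.a₁ * (y₁ - L * x₁)) + -(V.a₃ * L) := by
    rcases hL with ⟨hne, hLv⟩ | ⟨hx, hy, _, hLv⟩
    · have hy2 : y₂ = L * x₂ + (y₁ - L * x₁) := by linear_combination hLv
      subst hy2
      rw [equation_iff] at e₁ e₂
      have hG : (x₂ - x₁) * ((x₁ * x₂ + V.toAffine.addX x₁ x₂ L * (x₁ + x₂)) -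
          (V.a₄ + -(2 * L * (y₁ - L * x₁)) + -(V.a₁ * (y₁ - L * x₁)) + -(V.a₃ * L))) = 0 := by
        simp only [WeierstrassCurve.Affine.addX]
        linear_combination e₂ - e₁
      have := (mul_eq_zero.mp hG).resolve_left (sub_ne_zero.mpr (Ne.symm hne))
      exact sub_eq_zero.mp this
    · subst hx; subst hy
      rw [equation_iff] at e₁
      simp only [WeierstrassCurve.Affine.addX]
      linear_combination hLv
  have hId3 : x₁ * x₂ * V.toAffine.addX x₁ x₂ L =
      (y₁ - L * x₁) * (y₁ - L * x₁) + (V.a₃ * (y₁ - L * x₁) + -V.a₆) := by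
    rcases hL with ⟨hne, hLv⟩ | ⟨hx, hy, _, hLv⟩
    · have hy2 : y₂ = L * x₂ + (y₁ - L * x₁) := by linear_combination hLv
      subst hy2
      rw [equation_iff] at e₁ e₂
      have hG : (x₂ - x₁) * ((x₁ * x₂ * V.toAffine.addX x₁ x₂ L) -
          ((y₁ - L * x₁) * (y₁ - L * x₁) + (V.a₃ * (y₁ - L * x₁) + -V.a₆))) = 0 := by
        simp only [WeierstrassCurve.Affine.addX]
        linear_combination x₁ * e₂ - x₂ * e₁
      have := (mul_eq_zero.mp hG).resolve_left (sub_ne_zero.mpr (Ne.symm hne))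
      exact sub_eq_zero.mp this
    · subst hx; subst hy
      rw [equation_iff] at e₁
      simp only [WeierstrassCurve.Affine.addX]
      linear_combination x₁ * hLv - e₁
  -- basic negativity facts
  have hmin0 : min (v (V.toAffine.addX x₁ x₂ L)) 0 ≤ 0 := min_le_right _ _
  have hmax0 : max (min (v x₁) 0) (min (v x₂) 0) < 0 := lt_of_lt_of_le hcon hmin0
  have hx1neg : v x₁ < 0 := by
    have := (max_lt_iff.mp hmax0).1
    rcases min_lt_iff.mp this with h | h
    · exact h
    · exact absurd h (lt_irrefl 0)
  have hx2neg : v x₂ < 0 := by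
    have := (max_lt_iff.mp hmax0).2
    rcases min_lt_iff.mp this with h | h
    · exact h
    · exact absurd h (lt_irrefl 0)
  obtain ⟨A, hA⟩ := WithTop.ne_top_iff_exists.mp (ne_top_of_lt hx1neg)
  obtain ⟨B, hB⟩ := WithTop.ne_top_iff_exists.mp (ne_top_of_lt hx2neg)
  have hAneg : A < 0 := by rw [← hA] at hx1neg; exact_mod_cast hx1neg
  have hBneg : B < 0 := by rw [← hB] at hx2neg; exact_mod_cast hx2neg
  have hx3 : ((max A B : ℤ) : WithTop ℤ) < v (V.toAffine.addX x₁ x₂ L) := by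
    have h1 : max (min (v x₁) 0) (min (v x₂) 0) = ((max A B : ℤ) : WithTop ℤ) := by
      rw [min_eq_left hx1neg.le, min_eq_left hx2neg.le, ← hA, ← hB]
      rcases le_total A B with h | h
      · rw [max_eq_right h, max_eq_right (WithTop.coe_le_coe.mpr h)]
      · rw [max_eq_left h, max_eq_left (WithTop.coe_le_coe.mpr h)]
    calc ((max A B : ℤ) : WithTop ℤ) = max (min (v x₁) 0) (min (v x₂) 0) := h1.symm
      _ < min (v (V.toAffine.addX x₁ x₂ L)) 0 := hcon
      _ ≤ v (V.toAffine.addX x₁ x₂ L) := min_le_left _ _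
  -- Step 1 : min A B ≤ 2 v L
  have hLbound : ((min A B : ℤ) : WithTop ℤ) ≤ v L + v L := by
    by_contra hc
    push_neg at hc
    have hLne : v L ≠ ⊤ := by
      intro h; rw [h] at hc; simp at hc
    obtain ⟨l, hl⟩ := WithTop.ne_top_iff_exists.mp hLne
    rw [← hl, ← WithTop.coe_add, WithTop.coe_lt_coe] at hc
    have hlneg : l < 0 := by omega
    have hid : L * L = V.toAffine.addX x₁ x₂ L + -(V.a₁ * L) + V.a₂ + x₁ + x₂ := by
      simp only [WeierstrassCurve.Affine.addX]; ring
    have hvLL : v (L * L) = ((l + l : ℤ) : WithTop ℤ) := by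
      rw [v.map_mul, ← hl, ← WithTop.coe_add]
    have hbig : ((l + l : ℤ) : WithTop ℤ) <
        v (V.toAffine.addX x₁ x₂ L + -(V.a₁ * L) + V.a₂ + x₁ + x₂) := by
      refine v.map_lt_add (v.map_lt_add (v.map_lt_add (v.map_lt_add ?_ ?_) ?_) ?_) ?_
      · exact lt_trans (WithTop.coe_lt_coe.mpr (by omega)) hx3
      · rw [v.map_neg, v.map_mul]
        have h1 : ((l : ℤ) : WithTop ℤ) ≤ v V.a₁ + v L := by
          rw [← hl]
          calc ((l : ℤ) : WithTop ℤ) = 0 + (l : ℤ) := (zero_add _).symm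
            _ ≤ v V.a₁ + (l : ℤ) := add_le_add_left ha₁ _
        exact lt_of_lt_of_le (WithTop.coe_lt_coe.mpr (by omega)) h1
      · exact lt_of_lt_of_le (lt_of_lt_of_le (WithTop.coe_lt_coe.mpr (by omega))
          (le_refl ((0 : ℤ) : WithTop ℤ))) (by exact_mod_cast ha₂)
      · rw [← hA]; exact WithTop.coe_lt_coe.mpr (by omega)
      · rw [← hB]; exact WithTop.coe_lt_coe.mpr (by omega)
    rw [← hid, hvLL] at hbig
    exact lt_irrefl _ hbig
  -- Step 2
  have hprod : v (x₁ * x₂) = ((A + B : ℤ) : WithTop ℤ) := by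
    rw [v.map_mul, ← hA, ← hB, ← WithTop.coe_add]
  have hs2 : v (x₁ * x₂ + V.toAffine.addX x₁ x₂ L * (x₁ + x₂)) = ((A + B : ℤ) : WithTop ℤ) := by
    rw [← hprod]
    apply v.map_add_eq_of_lt_left
    rw [hprod, v.map_mul]
    have h1 : ((min A B : ℤ) : WithTop ℤ) ≤ v (x₁ + x₂) := by
      refine le_trans ?_ (v.map_add _ _)
      rw [← hA, ← hB, le_min_iff]
      exact ⟨WithTop.coe_le_coe.mpr (min_le_left _ _), WithTop.coe_le_coe.mpr (min_le_right _ _)⟩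
    calc ((A + B : ℤ) : WithTop ℤ) = ((max A B : ℤ) : WithTop ℤ) + ((min A B : ℤ) : WithTop ℤ) := by
          rw [← WithTop.coe_add]; congr 1; omega
      _ < v (V.toAffine.addX x₁ x₂ L) + ((min A B : ℤ) : WithTop ℤ) :=
          WithTop.add_lt_add_right (WithTop.coe_ne_top) hx3
      _ ≤ v (V.toAffine.addX x₁ x₂ L) + v (x₁ + x₂) := add_le_add_right h1 _
  -- Step 3 : from hId2, get 2 v N ≤ min A B + 2 max A B
  have hNbound : v (y₁ - L * x₁) + v (y₁ - L * x₁) ≤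
      ((min A B + 2 * max A B : ℤ) : WithTop ℤ) := by
    have hsum : v (V.a₄ + -(2 * L * (y₁ - L * x₁)) + -(V.a₁ * (y₁ - L * x₁)) + -(V.a₃ * L)) =
        ((A + B : ℤ) : WithTop ℤ) := by rw [← hId2]; exact hs2
    have hABneg : (A + B : ℤ) < 0 := by omega
    have hcase1 : min (v (V.a₄ + -(2 * L * (y₁ - L * x₁)) + -(V.a₁ * (y₁ - L * x₁))))
        (v (-(V.a₃ * L))) ≤ ((A + B : ℤ) : WithTop ℤ) := hsum ▸ v.map_add _ _
    rcases min_le_iff.mp hcase1 with h123 | h4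
    · have hcase2 : min (v (V.a₄ + -(2 * L * (y₁ - L * x₁)))) (v (-(V.a₁ * (y₁ - L * x₁)))) ≤
          ((A + B : ℤ) : WithTop ℤ) := le_trans (v.map_add _ _) h123
      rcases min_le_iff.mp hcase2 with h12 | h3
      · have hcase3 : min (v V.a₄) (v (-(2 * L * (y₁ - L * x₁)))) ≤
            ((A + B : ℤ) : WithTop ℤ) := le_trans (v.map_add _ _) h12
        rcases min_le_iff.mp hcase3 with h1 | h2
        · exact absurd (le_trans ha₄ h1) (by
            intro h
            have : (0 : ℤ) ≤ A + B := by exact_mod_cast h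
            omega)
        · -- v L + v N ≤ A + B
          have hLN : v L + v (y₁ - L * x₁) ≤ ((A + B : ℤ) : WithTop ℤ) := by
            refine le_trans ?_ h2
            rw [v.map_neg, v.map_mul, v.map_mul]
            calc v L + v (y₁ - L * x₁) = 0 + (v L + v (y₁ - L * x₁)) := (zero_add _).symm
              _ ≤ v (2 : F) + (v L + v (y₁ - L * x₁)) := add_le_add_left hv2 _
              _ = v (2 : F) + v L + v (y₁ - L * x₁) := (add_assoc _ _ _).symm
          have hdouble : ((min A B : ℤ) : WithTop ℤ) + (v (y₁ - L * x₁) + v (y₁ - L * x₁)) ≤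
              ((2 * (A + B) : ℤ) : WithTop ℤ) := by
            calc ((min A B : ℤ) : WithTop ℤ) + (v (y₁ - L * x₁) + v (y₁ - L * x₁))
                ≤ (v L + v L) + (v (y₁ - L * x₁) + v (y₁ - L * x₁)) :=
                  add_le_add_left hLbound _
              _ = (v L + v (y₁ - L * x₁)) + (v L + v (y₁ - L * x₁)) := add_add_add_comm _ _ _ _
              _ ≤ ((A + B : ℤ) : WithTop ℤ) + ((A + B : ℤ) : WithTop ℤ) := add_le_add hLN hLN
              _ = ((2 * (A + B) : ℤ) : WithTop ℤ) := by rw [← WithTop.coe_add]; congr 1; ring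
          have := coe_add_le_cancel hdouble
          refine le_trans this (WithTop.coe_le_coe.mpr (by omega))
      · -- v N ≤ A + B
        have hN : v (y₁ - L * x₁) ≤ ((A + B : ℤ) : WithTop ℤ) := by
          refine le_trans ?_ h3
          rw [v.map_neg, v.map_mul]
          calc v (y₁ - L * x₁) = 0 + v (y₁ - L * x₁) := (zero_add _).symm
            _ ≤ v V.a₁ + v (y₁ - L * x₁) := add_le_add_left ha₁ _
        calc v (y₁ - L * x₁) + v (y₁ - L * x₁) ≤
            ((A + B : ℤ) : WithTop ℤ) + ((A + B : ℤ) : WithTop ℤ) := add_le_add hN hN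
          _ = ((2 * (A + B) : ℤ) : WithTop ℤ) := by rw [← WithTop.coe_add]; congr 1; ring
          _ ≤ ((min A B + 2 * max A B : ℤ) : WithTop ℤ) := WithTop.coe_le_coe.mpr (by omega)
    · -- v L ≤ A + B : contradiction with step 1
      exfalso
      have hL' : v L ≤ ((A + B : ℤ) : WithTop ℤ) := by
        refine le_trans ?_ h4
        rw [v.map_neg, v.map_mul]
        calc v L = 0 + v L := (zero_add _).symm
          _ ≤ v V.a₃ + v L := add_le_add_left ha₃ _
      have : ((min A B : ℤ) : WithTop ℤ) ≤ ((2 * (A + B) : ℤ) : WithTop ℤ) := by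
        refine le_trans hLbound ?_
        calc v L + v L ≤ ((A + B : ℤ) : WithTop ℤ) + ((A + B : ℤ) : WithTop ℤ) :=
            add_le_add hL' hL'
          _ = ((2 * (A + B) : ℤ) : WithTop ℤ) := by rw [← WithTop.coe_add]; congr 1; ring
      have h' : (min A B : ℤ) ≤ 2 * (A + B) := by exact_mod_cast this
      omega
  -- N is finite and negative
  have hNne : v (y₁ - L * x₁) ≠ ⊤ := by
    intro h
    rw [h, top_add] at hNbound
    exact WithTop.not_top_le_coe _ hNbound
  obtain ⟨n0, hn0⟩ := WithTop.ne_top_iff_exists.mp hNne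
  have hn0neg : n0 + n0 ≤ min A B + 2 * max A B := by
    rw [← hn0, ← WithTop.coe_add, WithTop.coe_le_coe] at hNbound
    exact hNbound
  -- Step 4 : contradiction via hId3
  have hlhs : ((min A B + 2 * max A B : ℤ) : WithTop ℤ) < v (x₁ * x₂ * V.toAffine.addX x₁ x₂ L) := by
    rw [v.map_mul, hprod]
    calc ((min A B + 2 * max A B : ℤ) : WithTop ℤ)
        = ((A + B : ℤ) : WithTop ℤ) + ((max A B : ℤ) : WithTop ℤ) := by
          rw [← WithTop.coe_add]; congr 1; omega
      _ < ((A + B : ℤ) : WithTop ℤ) + v (V.toAffine.addX x₁ x₂ L) :=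
          WithTop.add_lt_add_left (WithTop.coe_ne_top) hx3
  have hrhs : v ((y₁ - L * x₁) * (y₁ - L * x₁) + (V.a₃ * (y₁ - L * x₁) + -V.a₆)) =
      ((n0 + n0 : ℤ) : WithTop ℤ) := by
    have hNN : v ((y₁ - L * x₁) * (y₁ - L * x₁)) = ((n0 + n0 : ℤ) : WithTop ℤ) := by
      rw [v.map_mul, ← hn0, ← WithTop.coe_add]
    rw [← hNN]
    apply v.map_add_eq_of_lt_left
    rw [hNN]
    have hminmax : min A B + 2 * max A B < 0 := by omega
    have hn0neg' : n0 < 0 := by omega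
    refine v.map_lt_add ?_ ?_
    · rw [v.map_mul, ← hn0]
      calc ((n0 + n0 : ℤ) : WithTop ℤ) < ((n0 : ℤ) : WithTop ℤ) := WithTop.coe_lt_coe.mpr (by omega)
        _ = 0 + ((n0 : ℤ) : WithTop ℤ) := (zero_add _).symm
        _ ≤ v V.a₃ + (n0 : ℤ) := add_le_add_left ha₃ _
    · rw [v.map_neg]
      exact lt_of_lt_of_le (WithTop.coe_lt_coe.mpr (by omega) :
        ((n0 + n0 : ℤ) : WithTop ℤ) < ((0 : ℤ) : WithTop ℤ)) (by exact_mod_cast ha₆)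
  rw [hId3, hrhs] at hlhs
  have : (min A B + 2 * max A B : ℤ) < n0 + n0 := by exact_mod_cast hlhs
  omega

lemma equation_vc {W : WeierstrassCurve F} (C : VariableChange F) {x y : F}
    (h : W.toAffine.Equation x y) :
    (C • W).toAffine.Equation (((C.u⁻¹ : Fˣ) : F) ^ 2 * (x - C.r))
      (((C.u⁻¹ : Fˣ) : F) ^ 3 * (y - C.s * (x - C.r) - C.t)) := by
  rw [equation_iff] at h ⊢
  simp only [variableChange_a₁, variableChange_a₂, variableChange_a₃, variableChange_a₄,
    variableChange_a₆]
  linear_combination ((C.u⁻¹ : Fˣ) : F) ^ 6 * h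

lemma addX_vc (W : WeierstrassCurve F) (C : VariableChange F) (x₁ x₂ L : F) :
    ((C.u⁻¹ : Fˣ) : F) ^ 2 * (W.toAffine.addX x₁ x₂ L - C.r) =
      (C • W).toAffine.addX (((C.u⁻¹ : Fˣ) : F) ^ 2 * (x₁ - C.r))
        (((C.u⁻¹ : Fˣ) : F) ^ 2 * (x₂ - C.r)) (((C.u⁻¹ : Fˣ) : F) * (L - C.s)) := by
  simp only [WeierstrassCurve.Affine.addX, variableChange_a₁, variableChange_a₂]
  ring

lemma transport (v : AddValuation F (WithTop ℤ)) {W : WeierstrassCurve F} {C : VariableChange F}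
    (hint : IsIntegralModel v (C • W)) {x₁ y₁ x₂ y₂ : F}
    (h₁ : W.toAffine.Equation x₁ y₁) (h₂ : W.toAffine.Equation x₂ y₂)
    (hxy : ¬(x₁ = x₂ ∧ y₁ = W.toAffine.negY x₂ y₂)) :
    min (v (((C.u⁻¹ : Fˣ) : F) ^ 2 *
        (W.toAffine.addX x₁ x₂ (W.toAffine.slope x₁ x₂ y₁ y₂) - C.r))) 0 ≤
      max (min (v (((C.u⁻¹ : Fˣ) : F) ^ 2 * (x₁ - C.r))) 0)
        (min (v (((C.u⁻¹ : Fˣ) : F) ^ 2 * (x₂ - C.r))) 0) := by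
  have hu : ((C.u⁻¹ : Fˣ) : F) ≠ 0 := Units.ne_zero _
  have hE₁ := equation_vc C h₁
  have hE₂ := equation_vc C h₂
  rw [addX_vc W C]
  by_cases hx : x₁ = x₂
  · -- tangent case
    have hy : y₁ ≠ W.toAffine.negY x₂ y₂ := fun h => hxy ⟨hx, h⟩
    have hyy : y₁ = y₂ := Y_eq_of_Y_ne h₁ h₂ hx hy
    have hd : 2 * y₁ + W.a₁ * x₁ + W.a₃ ≠ 0 := by
      intro h0
      apply hy
      rw [← hx, ← hyy]
      simp only [WeierstrassCurve.Affine.negY]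
      linear_combination h0
    have hLv : W.toAffine.slope x₁ x₂ y₁ y₂ * (2 * y₁ + W.a₁ * x₁ + W.a₃) =
        3 * x₁ ^ 2 + 2 * W.a₂ * x₁ + W.a₄ - W.a₁ * y₁ := by
      rw [slope_of_Y_ne hx hy]
      have hden : y₁ - W.toAffine.negY x₁ y₁ = 2 * y₁ + W.a₁ * x₁ + W.a₃ := by
        simp only [WeierstrassCurve.Affine.negY]; ring
      rw [hden, div_mul_cancel₀ _ hd]
    refine key v hint hE₁ hE₂ (Or.inr ⟨?_, ?_, ?_, ?_⟩)
    · rw [hx]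
    · rw [hx, hyy]
    · have hden' : 2 * (((C.u⁻¹ : Fˣ) : F) ^ 3 * (y₁ - C.s * (x₁ - C.r) - C.t)) +
          (C • W).a₁ * (((C.u⁻¹ : Fˣ) : F) ^ 2 * (x₁ - C.r)) +
          (C • W).a₃ =
          ((C.u⁻¹ : Fˣ) : F) ^ 3 * (2 * y₁ + W.a₁ * x₁ + W.a₃) := by
        simp only [variableChange_a₁, variableChange_a₃]; ring
      rw [hden']
      exact mul_ne_zero (pow_ne_zero 3 hu) hd
    · simp only [variableChange_a₁, variableChange_a₂, variableChange_a₃, variableChange_a₄]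
      linear_combination ((C.u⁻¹ : Fˣ) : F) ^ 4 * hLv
  · -- chord case
    have hLv : W.toAffine.slope x₁ x₂ y₁ y₂ * (x₁ - x₂) = y₁ - y₂ := by
      rw [slope_of_X_ne hx, div_mul_cancel₀ _ (sub_ne_zero.mpr hx)]
    refine key v hint hE₁ hE₂ (Or.inl ⟨?_, ?_⟩)
    · intro h
      apply hx
      have := mul_left_cancel₀ (pow_ne_zero 2 hu) h
      exact sub_left_inj.mp this
    · linear_combination ((C.u⁻¹ : Fˣ) : F) ^ 3 * hLv

/-- The level set of points whose transformed `x`-coordinate has `min(v x, 0) ≤ i`,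
as a subgroup. -/
noncomputable def levelSet (v : AddValuation F (WithTop ℤ)) (W : WeierstrassCurve F)
    (C : VariableChange F) (hint : IsIntegralModel v (C • W)) (i : WithTop ℤ) :
    AddSubgroup W.toAffine.Point where
  carrier := {Q | ∀ (x y : F) (h : W.toAffine.Nonsingular x y), Q = Point.some _ _ h →
      min (v (((C.u⁻¹ : Fˣ) : F) ^ 2 * (x - C.r))) 0 ≤ i}
  zero_mem' := by
    intro x y h hQ
    exact absurd hQ.symm (Point.some_ne_zero h)
  neg_mem' := by
    intro Q hQ x y h heq
    exact hQ x _ ((nonsingular_neg ..).mpr h) (by rw [← neg_neg Q, heq, Point.neg_some])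
  add_mem' := by
    intro Q₁ Q₂ hQ₁ hQ₂ x y h heq
    rcases Q₁ with _ | @⟨x₁, y₁, h₁⟩
    · rw [← Point.zero_def, zero_add] at heq
      exact hQ₂ x y h heq
    rcases Q₂ with _ | @⟨x₂, y₂, h₂⟩
    · rw [← Point.zero_def, add_zero] at heq
      exact hQ₁ x y h heq
    by_cases hc : x₁ = x₂ ∧ y₁ = W.toAffine.negY x₂ y₂
    · rw [Point.add_of_Y_eq hc.1 hc.2] at heq
      exact absurd heq.symm (Point.some_ne_zero h)
    · rw [Point.add_some hc] at heq
      cases heq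
      exact le_trans (transport v hint h₁.1 h₂.1 hc)
        (max_le (hQ₁ x₁ y₁ h₁ rfl) (hQ₂ x₂ y₂ h₂ rfl))

lemma v_b_nonneg (v : AddValuation F (WithTop ℤ)) {V : WeierstrassCurve F}
    (hV : IsIntegralModel v V) :
    0 ≤ v V.b₂ ∧ 0 ≤ v V.b₄ ∧ 0 ≤ v V.b₆ ∧ 0 ≤ v V.b₈ := by
  obtain ⟨h1, h2, h3, h4, h6⟩ := hV
  have hv2 : (0 : WithTop ℤ) ≤ v (2 : F) := by
    have := v_natCast_nonneg v 2; push_cast at this; exact this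
  have hv4 : (0 : WithTop ℤ) ≤ v (4 : F) := by
    have := v_natCast_nonneg v 4; push_cast at this; exact this
  refine ⟨?_, ?_, ?_, ?_⟩
  · rw [WeierstrassCurve.b₂]
    refine v.map_le_add ?_ ?_
    · rw [pow_two, v.map_mul]; exact add_nonneg h1 h1
    · rw [v.map_mul]; exact add_nonneg hv4 h2
  · rw [WeierstrassCurve.b₄]
    refine v.map_le_add ?_ ?_
    · rw [v.map_mul]; exact add_nonneg hv2 h4
    · rw [v.map_mul]; exact add_nonneg h1 h3
  · rw [WeierstrassCurve.b₆]
    refine v.map_le_add ?_ ?_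
    · rw [pow_two, v.map_mul]; exact add_nonneg h3 h3
    · rw [v.map_mul]; exact add_nonneg hv4 h6
  · rw [WeierstrassCurve.b₈]
    refine AddValuation.map_le_sub v (v.map_le_add (AddValuation.map_le_sub v
      (v.map_le_add ?_ ?_) ?_) ?_) ?_
    · rw [v.map_mul, pow_two, v.map_mul]; exact add_nonneg (add_nonneg h1 h1) h6
    · rw [v.map_mul, v.map_mul]; exact add_nonneg (add_nonneg hv4 h2) h6
    · rw [v.map_mul, v.map_mul]; exact add_nonneg (add_nonneg h1 h3) h4
    · rw [v.map_mul, pow_two, v.map_mul]; exact add_nonneg h2 (add_nonneg h3 h3)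
    · rw [pow_two, v.map_mul]; exact add_nonneg h4 h4

lemma add_coe_cancel {x : WithTop ℤ} {c : ℤ} (h : x + (c : WithTop ℤ) = (c : WithTop ℤ)) :
    x = 0 := by
  cases x with
  | top => simp at h
  | coe x0 =>
      rw [← WithTop.coe_add, WithTop.coe_eq_coe] at h
      exact_mod_cast (by omega : x0 = 0)

lemma psi_min_eq {K : Type*} [Field K] [Algebra K F] (v : AddValuation F (WithTop ℤ))
    (hv : TrivialOnBase K v) {W : WeierstrassCurve F} [W.IsElliptic]
    {C₁ C₂ : VariableChange F}
    (hm₁ : IsMinimalModel v (C₁ • W))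
    (hm₂ : IsMinimalModel v (C₂ • W)) (x : F) :
    min (v (((C₁.u⁻¹ : Fˣ) : F) ^ 2 * (x - C₁.r))) 0 =
      min (v (((C₂.u⁻¹ : Fˣ) : F) ^ 2 * (x - C₂.r))) 0 := by
  set D := C₂ * C₁⁻¹ with hDdef
  have hD : D * C₁ = C₂ := inv_mul_cancel_right C₂ C₁
  have hWvc : C₂ • W = D • (C₁ • W) := by
    rw [← hD]; exact (mul_smul D C₁ W)
  have hD' : C₁ * C₂⁻¹ * C₂ = C₁ := inv_mul_cancel_right C₁ C₂
  have hle₁ : v (C₁ • W).Δ ≤ v (C₂ • W).Δ := by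
    have := hm₁.2 D (by rw [← mul_smul, hD]; exact hm₂.1)
    rwa [← mul_smul, hD] at this
  have hle₂ : v (C₂ • W).Δ ≤ v (C₁ • W).Δ := by
    have := hm₂.2 (C₁ * C₂⁻¹) (by rw [← mul_smul, hD']; exact hm₁.1)
    rwa [← mul_smul, hD'] at this
  have heqΔ : v (C₂ • W).Δ = v (C₁ • W).Δ := le_antisymm hle₂ hle₁
  have hΔne : (C₁ • W).Δ ≠ 0 := (C₁ • W).isUnit_Δ.ne_zero
  obtain ⟨d0, hd0⟩ := WithTop.ne_top_iff_exists.mp (v_ne_top v hΔne)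
  have hune : ((D.u⁻¹ : Fˣ) : F) ≠ 0 := Units.ne_zero _
  -- v of the unit is zero
  have hvu12 : v (((D.u⁻¹ : Fˣ) : F) ^ 12) = 0 := by
    have h12 : v (C₂ • W).Δ =
        v (((D.u⁻¹ : Fˣ) : F) ^ 12) + v (C₁ • W).Δ := by
      rw [hWvc, variableChange_Δ, v.map_mul]
    rw [heqΔ, ← hd0] at h12
    exact add_coe_cancel h12.symm
  have hvu : v ((D.u⁻¹ : Fˣ) : F) = 0 := by
    obtain ⟨w, hw⟩ := WithTop.ne_top_iff_exists.mp (v_ne_top v hune)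
    rw [v.map_pow, ← hw] at hvu12
    rw [← hw]
    have h0 : (12 : ℕ) • w = 0 := by exact_mod_cast hvu12
    rw [nsmul_eq_mul] at h0
    norm_cast
    push_cast at h0
    omega
  obtain ⟨hb2, hb4, hb6, hb8⟩ := v_b_nonneg v hm₁.1
  obtain ⟨hb2', hb4', hb6', hb8'⟩ := v_b_nonneg v hm₂.1
  have hv3' : (0 : WithTop ℤ) ≤ v (3 : F) := by
    have := v_natCast_nonneg v 3; push_cast at this; exact this
  have hv2' : (0 : WithTop ℤ) ≤ v (2 : F) := by
    have := v_natCast_nonneg v 2; push_cast at this; exact this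
  -- the scaling factors of b-invariants have valuation ≥ 0
  have hS6 : 0 ≤ v ((C₁ • W).b₆ + 2 * D.r * (C₁ • W).b₄ +
      D.r ^ 2 * (C₁ • W).b₂ + 4 * D.r ^ 3) := by
    have h2 : v ((C₂ • W).b₆) =
        v (((D.u⁻¹ : Fˣ) : F) ^ 6) + v ((C₁ • W).b₆ +
          2 * D.r * (C₁ • W).b₄ +
          D.r ^ 2 * (C₁ • W).b₂ + 4 * D.r ^ 3) := by
      rw [hWvc, variableChange_b₆, v.map_mul]
    rw [v.map_pow, hvu, smul_zero, zero_add] at h2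
    rw [← h2]; exact hb6'
  have hS8 : 0 ≤ v ((C₁ • W).b₈ + 3 * D.r * (C₁ • W).b₆ +
      3 * D.r ^ 2 * (C₁ • W).b₄ + D.r ^ 3 * (C₁ • W).b₂ +
      3 * D.r ^ 4) := by
    have h2 : v ((C₂ • W).b₈) =
        v (((D.u⁻¹ : Fˣ) : F) ^ 8) + v ((C₁ • W).b₈ +
          3 * D.r * (C₁ • W).b₆ + 3 * D.r ^ 2 * (C₁ • W).b₄ +
          D.r ^ 3 * (C₁ • W).b₂ + 3 * D.r ^ 4) := by
      rw [hWvc, variableChange_b₈, v.map_mul]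
    rw [v.map_pow, hvu, smul_zero, zero_add] at h2
    rw [← h2]; exact hb8'
  -- integrality of D.r
  have hr : 0 ≤ v D.r := by
    by_contra hrc
    push_neg at hrc
    obtain ⟨ρ, hρ⟩ := WithTop.ne_top_iff_exists.mp (ne_top_of_lt hrc)
    have hρneg : ρ < 0 := by rw [← hρ] at hrc; exact_mod_cast hrc
    by_cases h4 : (4 : F) = 0
    · -- characteristic 2 : use b₈ and v 3 = 0
      have h3 : (3 : F) ≠ 0 := by
        intro h3
        exact one_ne_zero (by linear_combination h4 - h3 : (1 : F) = 0)
      have hmap3 : algebraMap K F (3 : K) = (3 : F) := map_ofNat _ 3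
      have h3K : (3 : K) ≠ 0 := by
        intro hk; apply h3; rw [← hmap3, hk, map_zero]
      have hv3 : v (3 : F) = 0 := by rw [← hmap3]; exact hv _ h3K
      have hident : (3 : F) * (D.r * (D.r * (D.r * D.r))) =
          ((C₁ • W).b₈ + 3 * D.r * (C₁ • W).b₆ +
            3 * D.r ^ 2 * (C₁ • W).b₄ + D.r ^ 3 * (C₁ • W).b₂ +
            3 * D.r ^ 4) + -(C₁ • W).b₈ +
          -((3 : F) * D.r * (C₁ • W).b₆) +
          -((3 : F) * (D.r * D.r) * (C₁ • W).b₄) +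
          -((D.r * (D.r * D.r)) * (C₁ • W).b₂) := by ring
      have hvlhs : v ((3 : F) * (D.r * (D.r * (D.r * D.r)))) =
          ((ρ + ρ + ρ + ρ : ℤ) : WithTop ℤ) := by
        rw [v.map_mul, v.map_mul, v.map_mul, v.map_mul, hv3, ← hρ, zero_add]
        push_cast
        simp [add_assoc]
      have hbig : ((ρ + ρ + ρ + ρ : ℤ) : WithTop ℤ) < v (((C₁ • W).b₈ +
          3 * D.r * (C₁ • W).b₆ + 3 * D.r ^ 2 * (C₁ • W).b₄ +
          D.r ^ 3 * (C₁ • W).b₂ + 3 * D.r ^ 4) + -(C₁ • W).b₈ +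
          -((3 : F) * D.r * (C₁ • W).b₆) +
          -((3 : F) * (D.r * D.r) * (C₁ • W).b₄) +
          -((D.r * (D.r * D.r)) * (C₁ • W).b₂)) := by
        refine v.map_lt_add (v.map_lt_add (v.map_lt_add (v.map_lt_add ?_ ?_) ?_) ?_) ?_
        · exact lt_of_lt_of_le (WithTop.coe_lt_coe.mpr (by omega :
            (ρ + ρ + ρ + ρ : ℤ) < 0)) hS8
        · rw [v.map_neg]
          exact lt_of_lt_of_le (WithTop.coe_lt_coe.mpr (by omega :
            (ρ + ρ + ρ + ρ : ℤ) < 0)) hb8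
        · rw [v.map_neg, v.map_mul, v.map_mul]
          have : ((ρ : ℤ) : WithTop ℤ) ≤ v (3 : F) + v D.r + v (C₁ • W).b₆ := by
            rw [← hρ]
            calc ((ρ : ℤ) : WithTop ℤ) = 0 + (ρ : ℤ) + 0 := by simp
              _ ≤ v (3 : F) + (ρ : ℤ) + v (C₁ • W).b₆ :=
                add_le_add (add_le_add_left hv3' _) hb6
          exact lt_of_lt_of_le (WithTop.coe_lt_coe.mpr (by omega)) this
        · rw [v.map_neg, v.map_mul, v.map_mul, v.map_mul]
          have : ((ρ + ρ : ℤ) : WithTop ℤ) ≤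
              v (3 : F) + (v D.r + v D.r) + v (C₁ • W).b₄ := by
            rw [← hρ]
            calc ((ρ + ρ : ℤ) : WithTop ℤ) = 0 + (((ρ : ℤ) : WithTop ℤ) + (ρ : ℤ)) + 0 := by
                  rw [WithTop.coe_add]; simp
              _ ≤ v (3 : F) + (((ρ : ℤ) : WithTop ℤ) + (ρ : ℤ)) + v (C₁ • W).b₄ :=
                add_le_add (add_le_add_left hv3' _) hb4
          exact lt_of_lt_of_le (WithTop.coe_lt_coe.mpr (by omega)) this
        · rw [v.map_neg, v.map_mul, v.map_mul, v.map_mul]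
          have : ((ρ + ρ + ρ : ℤ) : WithTop ℤ) ≤
              v D.r + (v D.r + v D.r) + v (C₁ • W).b₂ := by
            rw [← hρ]
            calc ((ρ + ρ + ρ : ℤ) : WithTop ℤ) =
                (ρ : ℤ) + (((ρ : ℤ) : WithTop ℤ) + (ρ : ℤ)) + 0 := by
                  rw [WithTop.coe_add, WithTop.coe_add]; simp [add_assoc]
              _ ≤ (ρ : ℤ) + (((ρ : ℤ) : WithTop ℤ) + (ρ : ℤ)) + v (C₁ • W).b₂ :=
                add_le_add_right hb2 _
          exact lt_of_lt_of_le (WithTop.coe_lt_coe.mpr (by omega)) this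
      rw [← hident, hvlhs] at hbig
      exact lt_irrefl _ hbig
    · -- v 4 = 0 : use b₆
      have hmap4 : algebraMap K F (4 : K) = (4 : F) := map_ofNat _ 4
      have h4K : (4 : K) ≠ 0 := by
        intro hk; apply h4; rw [← hmap4, hk, map_zero]
      have hv4 : v (4 : F) = 0 := by rw [← hmap4]; exact hv _ h4K
      have hident : (4 : F) * (D.r * (D.r * D.r)) =
          ((C₁ • W).b₆ + 2 * D.r * (C₁ • W).b₄ +
            D.r ^ 2 * (C₁ • W).b₂ + 4 * D.r ^ 3) +
          -(C₁ • W).b₆ +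
          -((2 : F) * D.r * (C₁ • W).b₄) +
          -((D.r * D.r) * (C₁ • W).b₂) := by ring
      have hvlhs : v ((4 : F) * (D.r * (D.r * D.r))) = ((ρ + ρ + ρ : ℤ) : WithTop ℤ) := by
        rw [v.map_mul, v.map_mul, v.map_mul, hv4, ← hρ, zero_add]
        push_cast
        simp [add_assoc]
      have hbig : ((ρ + ρ + ρ : ℤ) : WithTop ℤ) < v (((C₁ • W).b₆ +
          2 * D.r * (C₁ • W).b₄ + D.r ^ 2 * (C₁ • W).b₂ +
          4 * D.r ^ 3) + -(C₁ • W).b₆ +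
          -((2 : F) * D.r * (C₁ • W).b₄) +
          -((D.r * D.r) * (C₁ • W).b₂)) := by
        refine v.map_lt_add (v.map_lt_add (v.map_lt_add ?_ ?_) ?_) ?_
        · exact lt_of_lt_of_le (WithTop.coe_lt_coe.mpr (by omega :
            (ρ + ρ + ρ : ℤ) < 0)) hS6
        · rw [v.map_neg]
          exact lt_of_lt_of_le (WithTop.coe_lt_coe.mpr (by omega :
            (ρ + ρ + ρ : ℤ) < 0)) hb6
        · rw [v.map_neg, v.map_mul, v.map_mul]
          have : ((ρ : ℤ) : WithTop ℤ) ≤ v (2 : F) + v D.r + v (C₁ • W).b₄ := by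
            rw [← hρ]
            calc ((ρ : ℤ) : WithTop ℤ) = 0 + (ρ : ℤ) + 0 := by simp
              _ ≤ v (2 : F) + (ρ : ℤ) + v (C₁ • W).b₄ :=
                add_le_add (add_le_add_left hv2' _) hb4
          exact lt_of_lt_of_le (WithTop.coe_lt_coe.mpr (by omega)) this
        · rw [v.map_neg, v.map_mul, v.map_mul]
          have : ((ρ + ρ : ℤ) : WithTop ℤ) ≤
              v D.r + v D.r + v (C₁ • W).b₂ := by
            rw [← hρ]
            calc ((ρ + ρ : ℤ) : WithTop ℤ) = (ρ : ℤ) + ((ρ : ℤ) : WithTop ℤ) + 0 := by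
                  rw [WithTop.coe_add]; simp
              _ ≤ (ρ : ℤ) + ((ρ : ℤ) : WithTop ℤ) + v (C₁ • W).b₂ :=
                add_le_add_right hb2 _
          exact lt_of_lt_of_le (WithTop.coe_lt_coe.mpr (by omega)) this
      rw [← hident, hvlhs] at hbig
      exact lt_irrefl _ hbig
  -- final computation
  have hu₁ : ((C₁.u⁻¹ : Fˣ) : F) * ((C₁.u : Fˣ) : F) = 1 := by
    rw [← Units.val_mul, inv_mul_cancel, Units.val_one]
  have hψ : ((C₂.u⁻¹ : Fˣ) : F) ^ 2 * (x - C₂.r) =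
      ((D.u⁻¹ : Fˣ) : F) ^ 2 * (((C₁.u⁻¹ : Fˣ) : F) ^ 2 * (x - C₁.r) - D.r) := by
    rw [← hD]
    simp only [VariableChange.mul_def, mul_inv_rev, Units.val_mul]
    linear_combination (-(((D.u⁻¹ : Fˣ) : F) ^ 2 * D.r *
      (((C₁.u⁻¹ : Fˣ) : F) * ((C₁.u : Fˣ) : F) + 1))) * hu₁
  rw [hψ]
  have hvv : v (((D.u⁻¹ : Fˣ) : F) ^ 2 * (((C₁.u⁻¹ : Fˣ) : F) ^ 2 * (x - C₁.r) - D.r)) =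
      v (((C₁.u⁻¹ : Fˣ) : F) ^ 2 * (x - C₁.r) - D.r) := by
    rw [v.map_mul, v.map_pow, hvu, smul_zero, zero_add]
  rw [hvv, min_v_sub_eq v hr]

end EDSAux

open Classical in
/-- **Strong divisibility property** of elliptic divisibility sequences over function fields:
`gcd(D_m, D_n) = D_{gcd(m,n)}`, valuation-wise: at every place `v`, the minimum of the
multiplicities of `v` in `D_m` and `D_n` equals its multiplicity in `D_{gcd(m,n)}`. -/
theorem eds_strong_divisibility {K F : Type*} [Field K] [Field F] [Algebra K F]
    (hFF : IsFunctionFieldOver K F)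
    (W : WeierstrassCurve F) [W.IsElliptic]
    (P : W.toAffine.Point) (hP : ¬ IsOfFinAddOrder P)
    (m n : ℕ) (hm : 0 < m) (hn : 0 < n)
    (v : AddValuation F (WithTop ℤ)) (hv : TrivialOnBase K v)
    (hnt : ∃ f : F, f ≠ 0 ∧ v f ≠ 0)
    (dm dn dg : ℕ)
    (h1 : HasEDSVal v W (m • P) dm) (h2 : HasEDSVal v W (n • P) dn)
    (h3 : HasEDSVal v W (Nat.gcd m n • P) dg) :
    min dm dn = dg := by
  obtain ⟨C₁, x₁, y₁, hns₁, hP₁, hmin₁, hd₁⟩ := h1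
  obtain ⟨C₂, x₂, y₂, hns₂, hP₂, hmin₂, hd₂⟩ := h2
  obtain ⟨C₃, x₃, y₃, hns₃, hP₃, hmin₃, hd₃⟩ := h3
  have hu₁ : min (v (((C₃.u⁻¹ : Fˣ) : F) ^ 2 * (x₁ - C₃.r))) 0 =
      ((-(2 * (dm : ℤ)) : ℤ) : WithTop ℤ) := by
    rw [← EDSAux.psi_min_eq v hv hmin₁ hmin₃ x₁]; exact hd₁.symm
  have hu₂ : min (v (((C₃.u⁻¹ : Fˣ) : F) ^ 2 * (x₂ - C₃.r))) 0 =
      ((-(2 * (dn : ℤ)) : ℤ) : WithTop ℤ) := by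
    rw [← EDSAux.psi_min_eq v hv hmin₂ hmin₃ x₂]; exact hd₂.symm
  have hu₃ : min (v (((C₃.u⁻¹ : Fˣ) : F) ^ 2 * (x₃ - C₃.r))) 0 =
      ((-(2 * (dg : ℤ)) : ℤ) : WithTop ℤ) := hd₃.symm
  set T : WithTop ℤ → AddSubgroup ℤ := fun i =>
    AddSubgroup.comap (zmultiplesHom _ P) (EDSAux.levelSet v W C₃ hmin₃.1 i) with hTdef
  have hmem : ∀ (k : ℕ) (x y : F) (hns : W.toAffine.Nonsingular x y) (d : ℕ),
      k • P = Point.some _ _ hns →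
      min (v (((C₃.u⁻¹ : Fˣ) : F) ^ 2 * (x - C₃.r))) 0 = ((-(2 * (d : ℤ)) : ℤ) : WithTop ℤ) →
      ∀ i : WithTop ℤ, ((k : ℤ) ∈ T i ↔ ((-(2 * (d : ℤ)) : ℤ) : WithTop ℤ) ≤ i) := by
    intro k x y hns d hk hval i
    rw [hTdef]
    rw [AddSubgroup.mem_comap]
    constructor
    · intro hmemk
      have := hmemk x y hns (by rw [zmultiplesHom_apply, natCast_zsmul, hk])
      rw [← hval]; exact this
    · intro hle x' y' hns' heq
      rw [zmultiplesHom_apply, natCast_zsmul, hk] at heq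
      cases heq
      rw [hval]; exact hle
  have hm' := hmem m x₁ y₁ hns₁ dm hP₁ hu₁
  have hn' := hmem n x₂ y₂ hns₂ dn hP₂ hu₂
  have hg' := hmem (Nat.gcd m n) x₃ y₃ hns₃ dg hP₃ hu₃
  have hdir1 : min dm dn ≤ dg := by
    have hmi : (m : ℤ) ∈ T ((-(2 * (min dm dn : ℤ)) : ℤ) : WithTop ℤ) :=
      (hm' _).mpr (WithTop.coe_le_coe.mpr (by push_cast; omega))
    have hni : (n : ℤ) ∈ T ((-(2 * (min dm dn : ℤ)) : ℤ) : WithTop ℤ) :=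
      (hn' _).mpr (WithTop.coe_le_coe.mpr (by push_cast; omega))
    have hbez : ((Nat.gcd m n : ℕ) : ℤ) =
        (m : ℤ) * Int.gcdA m n + (n : ℤ) * Int.gcdB m n := by
      have := Int.gcd_eq_gcd_ab (m : ℤ) (n : ℤ)
      rwa [Int.gcd_natCast_natCast] at this
    have hgi : ((Nat.gcd m n : ℕ) : ℤ) ∈ T ((-(2 * (min dm dn : ℤ)) : ℤ) : WithTop ℤ) := by
      rw [hbez]
      exact AddSubgroup.add_mem _
        (by simpa [smul_eq_mul, mul_comm] using
          AddSubgroup.zsmul_mem _ hmi (Int.gcdA m n))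
        (by simpa [smul_eq_mul, mul_comm] using
          AddSubgroup.zsmul_mem _ hni (Int.gcdB m n))
    have hle := (hg' _).mp hgi
    have h' : -(2 * (dg : ℤ)) ≤ -(2 * (min dm dn : ℤ)) := by exact_mod_cast hle
    push_cast at h'; omega
  have hdir2 : dg ≤ min dm dn := by
    have hgi : ((Nat.gcd m n : ℕ) : ℤ) ∈ T ((-(2 * (dg : ℤ)) : ℤ) : WithTop ℤ) :=
      (hg' _).mpr le_rfl
    have hmd : (m : ℤ) ∈ T ((-(2 * (dg : ℤ)) : ℤ) : WithTop ℤ) := by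
      have heqm : (m : ℤ) = ((m / Nat.gcd m n : ℕ) : ℤ) * ((Nat.gcd m n : ℕ) : ℤ) := by
        exact_mod_cast (Nat.div_mul_cancel (Nat.gcd_dvd_left m n)).symm
      rw [heqm]
      simpa [smul_eq_mul] using
        AddSubgroup.zsmul_mem _ hgi ((m / Nat.gcd m n : ℕ) : ℤ)
    have hnd : (n : ℤ) ∈ T ((-(2 * (dg : ℤ)) : ℤ) : WithTop ℤ) := by
      have heqn : (n : ℤ) = ((n / Nat.gcd m n : ℕ) : ℤ) * ((Nat.gcd m n : ℕ) : ℤ) := by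
        exact_mod_cast (Nat.div_mul_cancel (Nat.gcd_dvd_right m n)).symm
      rw [heqn]
      simpa [smul_eq_mul] using
        AddSubgroup.zsmul_mem _ hgi ((n / Nat.gcd m n : ℕ) : ℤ)
    have h1 := (hm' _).mp hmd
    have h2 := (hn' _).mp hnd
    have h1' : -(2 * (dm : ℤ)) ≤ -(2 * (dg : ℤ)) := by exact_mod_cast h1
    have h2' : -(2 * (dn : ℤ)) ≤ -(2 * (dg : ℤ)) := by exact_mod_cast h2
    push_cast at h1' h2'; omega
  omega
end

section
/- Let E : y² + a₁xy + a₃y = x³ + a₂x² + a₄x be a Weierstrass curve over a field L with the point P = (0,0), obtained from a general Weierstrass equation by translating P to the origin. If 2P ≠ O then a₃ ≠ 0, and the substitution y ↦ y − (a₄/a₃)x yields an equation with a₄ = 0; if additionally 3P ≠ O then a₂ ≠ 0 after this substitution, and the scaling (x,y) ↦ (u²x, u³y) with u = a₂/a₃ yields a₂ = a₃. The resulting equation is y² + (1−c)xy − by = x³ − bx² with b = −a₂, c = 1 − a₁ and P = (0,0). -/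
open WeierstrassCurve WeierstrassCurve.Affine

open scoped Classical

private lemma point_some_eq {L : Type*} [Field L] {W : WeierstrassCurve L}
    {x₁ y₁ x₂ y₂ : L} (hx : x₁ = x₂) (hy : y₁ = y₂) (h₁ : W.toAffine.Nonsingular x₁ y₁)
    (h₂ : W.toAffine.Nonsingular x₂ y₂) :
    (Point.some _ _ h₁ : W.toAffine.Point) = Point.some _ _ h₂ := by
  subst hx; subst hy; rfl

private lemma tate_step2 {L : Type*} [Field L] (W₁ : WeierstrassCurve L)
    (h2 : W₁.a₂ ≠ 0) (h3 : W₁.a₃ ≠ 0) (h4 : W₁.a₄ = 0) (h6 : W₁.a₆ = 0)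
    (C₂ : VariableChange L) (hr2 : C₂.r = 0) (hs2 : C₂.s = 0) (ht2 : C₂.t = 0)
    (hu2 : ((C₂.u⁻¹ : Lˣ) : L) = W₁.a₂ / W₁.a₃) :
    (C₂ • W₁).a₂ = (C₂ • W₁).a₃ ∧
    (C₂ • W₁).a₄ = 0 ∧ (C₂ • W₁).a₆ = 0 ∧
    (C₂ • W₁) =
      { a₁ := 1 - (1 - (C₂ • W₁).a₁),
        a₂ := -(-(C₂ • W₁).a₂),
        a₃ := -(-(C₂ • W₁).a₂),
        a₄ := 0, a₆ := 0 } := by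
  have f₂ : (C₂ • W₁).a₂ = ((C₂.u⁻¹ : Lˣ) : L) ^ 2 * W₁.a₂ := by
    simp [variableChange_def, hr2, hs2, ht2]
  have f₃ : (C₂ • W₁).a₃ = ((C₂.u⁻¹ : Lˣ) : L) ^ 3 * W₁.a₃ := by
    simp [variableChange_def, hr2, hs2, ht2]
  have f₄ : (C₂ • W₁).a₄ = 0 := by
    simp [variableChange_def, hr2, hs2, ht2, h4]
  have f₆ : (C₂ • W₁).a₆ = 0 := by
    simp [variableChange_def, hr2, hs2, ht2, h4, h6]
  have heq : (C₂ • W₁).a₂ = (C₂ • W₁).a₃ := by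
    rw [f₂, f₃, hu2]; field_simp
  refine ⟨heq, f₄, f₆, ?_⟩
  refine WeierstrassCurve.ext ?_ ?_ ?_ ?_ ?_
  · show _ = 1 - (1 - _); ring
  · show _ = -(-_); ring
  · show _ = -(-_); rw [neg_neg]; exact heq.symm
  · exact f₄
  · exact f₆

/-- **Existence part of the Tate normal form.** Let `E : y² + a₁xy + a₃y = x³ + a₂x² + a₄x`
over a field `L` with `P = (0, 0)`. If `2P ≠ O` then `a₃ ≠ 0` and the substitution
`y ↦ y - (a₄/a₃)x` (the variable change with `u = 1`, `r = t = 0`, `s = a₄/a₃`) yields an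
equation with `a₄ = 0`; if additionally `3P ≠ O` then the resulting `a₂ ≠ 0`, and the scaling
`(x, y) ↦ (u²x, u³y)` with `u = a₂/a₃` (the variable change whose unit is the inverse of
`a₂/a₃`, with `r = s = t = 0`) yields `a₂ = a₃`. The resulting equation is
`y² + (1-c)xy - by = x³ - bx²` with `b = -a₂`, `c = 1 - a₁` and `P = (0, 0)`. -/
theorem tate_normal_form_steps {L : Type*} [Field L] (W : WeierstrassCurve L)
    (ha₆ : W.a₆ = 0)
    (h : W.toAffine.Nonsingular 0 0)
    (h2 : 2 • (Point.some 0 0 h : W.toAffine.Point) ≠ 0)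
    (h3 : 3 • (Point.some 0 0 h : W.toAffine.Point) ≠ 0) :
    W.a₃ ≠ 0 ∧
    ∀ C₁ : VariableChange L, C₁.u = 1 → C₁.r = 0 → C₁.t = 0 → C₁.s = W.a₄ / W.a₃ →
      (C₁ • W).a₄ = 0 ∧ (C₁ • W).a₂ ≠ 0 ∧
      ∀ C₂ : VariableChange L, C₂.r = 0 → C₂.s = 0 → C₂.t = 0 →
        ((C₂.u⁻¹ : Lˣ) : L) = (C₁ • W).a₂ / (C₁ • W).a₃ →
        (C₂ • C₁ • W).a₂ =
          (C₂ • C₁ • W).a₃ ∧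
        (C₂ • C₁ • W).a₄ = 0 ∧
        (C₂ • C₁ • W).a₆ = 0 ∧
        (C₂ • C₁ • W) =
          { a₁ := 1 - (1 - (C₂ • C₁ • W).a₁),
            a₂ := -(-(C₂ • C₁ • W).a₂),
            a₃ := -(-(C₂ • C₁ • W).a₂),
            a₄ := 0, a₆ := 0 } := by
  have ha₃ : W.a₃ ≠ 0 := by
    intro ha₃
    apply h2
    rw [two_smul]
    exact Point.add_self_of_Y_eq (by simp [negY, ha₃])
  have hy0 : (0 : L) ≠ W.toAffine.negY 0 0 := by
    simp only [negY, mul_zero, neg_zero, zero_sub, sub_zero]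
    exact fun hc => ha₃ (neg_eq_zero.mp hc.symm)
  have hslope : W.toAffine.slope 0 0 0 0 = W.a₄ / W.a₃ := by
    rw [slope_of_Y_ne rfl hy0]
    simp [negY]
  have hkey : W.a₂ - W.a₄ / W.a₃ * W.a₁ - (W.a₄ / W.a₃) ^ 2 ≠ 0 := by
    intro hz
    have hxy : ¬((0 : L) = 0 ∧ (0 : L) = W.toAffine.negY 0 0) := fun hc => hy0 hc.2
    have h₂ : W.toAffine.Nonsingular (W.toAffine.addX 0 0 (W.toAffine.slope 0 0 0 0))
        (W.toAffine.addY 0 0 0 (W.toAffine.slope 0 0 0 0)) :=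
      nonsingular_add h h hxy
    have h2P : (Point.some 0 0 h : W.toAffine.Point) + Point.some 0 0 h = Point.some _ _ h₂ :=
      Point.add_some hxy
    have hX : W.toAffine.addX 0 0 (W.toAffine.slope 0 0 0 0) = 0 := by
      rw [hslope]; simp only [addX]
      linear_combination -hz
    have h3eq : 3 • (Point.some 0 0 h : W.toAffine.Point) = Point.some _ _ h₂ + Point.some 0 0 h := by
      rw [succ_nsmul, two_smul, h2P]
    rcases Y_eq_of_X_eq h₂.1 h.1 hX with hY | hY
    · have heq : (Point.some _ _ h₂ : W.toAffine.Point) = Point.some 0 0 h :=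
        point_some_eq hX hY h₂ h
      have hP0 : (Point.some 0 0 h : W.toAffine.Point) = 0 :=
        add_eq_right.mp (h2P.trans heq)
      exact Point.some_ne_zero h hP0
    · apply h3
      rw [h3eq, Point.add_of_Y_eq hX hY]
  refine ⟨ha₃, ?_⟩
  intro C₁ hu hr ht hs
  have e₂ : (C₁ • W).a₂ = W.a₂ - W.a₄ / W.a₃ * W.a₁ - (W.a₄ / W.a₃) ^ 2 := by
    simp [variableChange_def, hu, hr, ht, hs]
  have e₃ : (C₁ • W).a₃ = W.a₃ := by
    simp [variableChange_def, hu, hr, ht]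
  have e₄ : (C₁ • W).a₄ = 0 := by
    simp only [variableChange_def, hu, hr, ht, hs]
    field_simp
    simp
  have e₆ : (C₁ • W).a₆ = 0 := by
    simp [variableChange_def, hu, hr, ht, ha₆]
  exact ⟨e₄, e₂ ▸ hkey, fun C₂ hr2 hs2 ht2 hu2 =>
    tate_step2 _ (e₂ ▸ hkey) (e₃ ▸ ha₃) e₄ e₆ C₂ hr2 hs2 ht2 hu2⟩
end
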